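/- For every real number L with 0 < L < 2π, the infinite product whose k = 0 factor is 2 and whose factor for each k ≥ 1 is [(2 + (2πk/L)²)/((2πk/L)² − 1)]² converges and equals (sinh(L/√2)/sin(L/2))². Consequently (1/2π) times the square root of this product equals (1/2π)·sinh(L/√2)/sin(L/2). -/

import Mathlib

/-!
With `x = 2πk/L`, the factor for `k ≥ 1` is `((1 + a²/k²) / (1 - b²/k²))²` where
`a = L/(π√2)` and `b = L/(2π)`. Euler's products `∏ (1 + a²/k²) = sinh(πa)/(πa)` and
`∏ (1 - b²/k²) = sin(πb)/(πb)` (the first is the sine product at `ia`) then evaluate the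
product as `2 · ((sinh(L/√2)/(L/√2)) / (sin(L/2)/(L/2)))² = (sinh(L/√2)/sin(L/2))²`.
-/

open Real Filter Topology

namespace Real

theorem summable_sq_div_succ_sq (x : ℝ) : Summable fun n : ℕ => x ^ 2 / ((n : ℝ) + 1) ^ 2 := by
  simpa using (summable_pow_div_add (x ^ 2) 2 1 one_lt_two).of_norm

theorem hasProd_euler_sin_prod {x : ℝ} (hx : x ≠ 0) :
    HasProd (fun n : ℕ => 1 - x ^ 2 / ((n : ℝ) + 1) ^ 2) (sin (π * x) / (π * x)) := by
  have hmul : Multipliable fun n : ℕ => 1 - x ^ 2 / ((n : ℝ) + 1) ^ 2 := by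
    simpa only [sub_eq_add_neg] using
      Real.multipliable_one_add_of_summable (summable_sq_div_succ_sq x).neg
  rw [hmul.hasProd_iff_tendsto_nat]
  refine ((tendsto_euler_sin_prod x).div_const (π * x)).congr fun n => ?_
  field_simp

theorem tendsto_euler_sinh_prod (x : ℝ) :
    Tendsto (fun n : ℕ => π * x * ∏ j ∈ Finset.range n, (1 + x ^ 2 / ((j : ℝ) + 1) ^ 2))
      atTop (𝓝 (sinh (π * x))) := by
  have h := (Complex.continuous_im.tendsto _).comp (Complex.tendsto_euler_sin_prod (x * Complex.I))
  convert h using 2 with n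
  · have hfac : ∀ j : ℕ, (1 : ℂ) - (x * Complex.I) ^ 2 / ((j : ℂ) + 1) ^ 2
        = ((1 + x ^ 2 / ((j : ℝ) + 1) ^ 2 : ℝ) : ℂ) := fun j => by
      push_cast; rw [mul_pow, Complex.I_sq]; ring
    simp only [Function.comp_apply, hfac, ← Complex.ofReal_prod]
    set P := ∏ j ∈ Finset.range n, (1 + x ^ 2 / ((j : ℝ) + 1) ^ 2)
    rw [show (π : ℂ) * (x * Complex.I) * P = ((π * x * P : ℝ) : ℂ) * Complex.I by push_cast; ring,
      Complex.mul_I_im, Complex.ofReal_re]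
  · rw [show (π : ℂ) * (x * Complex.I) = ((π * x : ℝ) : ℂ) * Complex.I by push_cast; ring,
      Complex.sin_mul_I, ← Complex.ofReal_sinh, Complex.mul_I_im, Complex.ofReal_re]

theorem hasProd_euler_sinh_prod {x : ℝ} (hx : x ≠ 0) :
    HasProd (fun n : ℕ => 1 + x ^ 2 / ((n : ℝ) + 1) ^ 2) (sinh (π * x) / (π * x)) := by
  have hmul := Real.multipliable_one_add_of_summable (summable_sq_div_succ_sq x)
  rw [hmul.hasProd_iff_tendsto_nat]
  refine ((tendsto_euler_sinh_prod x).div_const (π * x)).congr fun n => ?_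
  field_simp

end Real

/-- `η_k / |λ_k|` for the two modes `±k` (for `L < 2π`, `|λ_k| = λ_k` when `k ≠ 0`), and
`η_0 / |λ_0| = 2` for the zero mode. -/
noncomputable def kramersRatio (L : ℝ) (k : ℕ) : ℝ :=
  if k = 0 then 2 else ((2 + (2 * π * k / L) ^ 2) / ((2 * π * k / L) ^ 2 - 1)) ^ 2

theorem two_add_div_sub_one {K : Type*} [Field K] {c : K} (hc : c ≠ 0) :
    (2 + c) / (c - 1) = (1 + 2 / c) / (1 - 1 / c) := by
  rw [← mul_div_mul_right (1 + 2 / c) (1 - 1 / c) hc, add_mul, sub_mul, div_mul_cancel₀ _ hc,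
    div_mul_cancel₀ _ hc, one_mul, add_comm]

theorem kramersRatio_succ {L : ℝ} (hL : L ≠ 0) (n : ℕ) :
    kramersRatio L (n + 1) =
      ((1 + (L / (π * √2)) ^ 2 / ((n : ℝ) + 1) ^ 2) /
        (1 - (L / (2 * π)) ^ 2 / ((n : ℝ) + 1) ^ 2)) ^ 2 := by
  have hsqrt : √2 ^ 2 = 2 := sq_sqrt zero_le_two
  have hn : (n : ℝ) + 1 ≠ 0 := n.cast_add_one_ne_zero
  rw [kramersRatio, if_neg n.succ_ne_zero, two_add_div_sub_one (by positivity)]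
  push_cast
  congr 3
  · rw [div_pow L, mul_pow π, hsqrt]; field_simp
  · field_simp

theorem hasProd_kramersRatio {L : ℝ} (hL : L ≠ 0) (hsin : sin (L / 2) ≠ 0) :
    HasProd (kramersRatio L) ((sinh (L / √2) / sin (L / 2)) ^ 2) := by
  have hπa : π * (L / (π * √2)) = L / √2 := by field_simp
  have hπb : π * (L / (2 * π)) = L / 2 := by field_simp
  have hsinh := hasProd_euler_sinh_prod (x := L / (π * √2)) (div_ne_zero hL (by positivity))
  have hsin' := hasProd_euler_sin_prod (x := L / (2 * π)) (div_ne_zero hL (by positivity))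
  rw [hπa] at hsinh
  rw [hπb] at hsin'
  have hsucc : HasProd (fun n => kramersRatio L (n + 1))
      (((sinh (L / √2) / (L / √2)) / (sin (L / 2) / (L / 2))) ^ 2) := by
    simpa only [kramersRatio_succ hL] using
      (hsinh.div₀ hsin' (div_ne_zero hsin (by positivity))).pow 2
  have hsqrt : √2 ^ 2 = 2 := sq_sqrt zero_le_two
  convert HasProd.zero_mul (f := kramersRatio L) hsucc using 1
  rw [kramersRatio, if_pos rfl]
  field_simp
  rw [hsqrt]

theorem stmt_1 (L : ℝ) (hL0 : 0 < L) (hL2pi : L < 2 * π) :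
    HasProd
      (fun k : ℕ => if k = 0 then 2 else
        ((2 + (2 * π * k / L) ^ 2) / ((2 * π * k / L) ^ 2 - 1)) ^ 2)
      ((Real.sinh (L / Real.sqrt 2) / Real.sin (L / 2)) ^ 2) ∧
    (1 / (2 * π)) *
        Real.sqrt (∏' k : ℕ, if k = 0 then 2 else
          ((2 + (2 * π * k / L) ^ 2) / ((2 * π * k / L) ^ 2 - 1)) ^ 2) =
      (1 / (2 * π)) * (Real.sinh (L / Real.sqrt 2) / Real.sin (L / 2)) := by
  have hsin : 0 < sin (L / 2) := sin_pos_of_pos_of_lt_pi (by positivity) (by linarith)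
  have hprod : HasProd (kramersRatio L) ((sinh (L / √2) / sin (L / 2)) ^ 2) :=
    hasProd_kramersRatio hL0.ne' hsin.ne'
  refine ⟨hprod, ?_⟩
  have hratio : 0 ≤ sinh (L / √2) / sin (L / 2) :=
    div_nonneg (sinh_nonneg_iff.mpr (by positivity)) hsin.le
  change _ * √(∏' k, kramersRatio L k) = _
  rw [hprod.tprod_eq, sqrt_sq hratio]
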